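/- The isentropic (Hu–Shu) vortex is a stationary solution of the 2D compressible Euler equations: with r² = (x−5)² + (y−5)², δT = −(γ−1)(25/(8γπ²)) e^{1−r²}, ρ = (1+δT)^{1/(γ−1)}, p = (1+δT)^{γ/(γ−1)}, and u = (5/(2π)) e^{(1−r²)/2} (5−y, x−5), one has div(ρu) = 0 and ρ(u·∇)u + ∇p = 0 pointwise (wherever 1+δT > 0). -/

import Mathlib

open Real

noncomputable def pd2 (j : Fin 2) (f : (Fin 2 → ℝ) → ℝ) (x : Fin 2 → ℝ) : ℝ :=
  fderiv ℝ f x (Pi.single j 1)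

noncomputable def r2 (x : Fin 2 → ℝ) : ℝ := (x 0 - 5) ^ 2 + (x 1 - 5) ^ 2

noncomputable def δT (γ : ℝ) (x : Fin 2 → ℝ) : ℝ :=
  -((γ - 1) * (25 / (8 * γ * Real.pi ^ 2)) * Real.exp (1 - r2 x))

noncomputable def vρ (γ : ℝ) (x : Fin 2 → ℝ) : ℝ := (1 + δT γ x) ^ (1 / (γ - 1))

noncomputable def vp (γ : ℝ) (x : Fin 2 → ℝ) : ℝ := (1 + δT γ x) ^ (γ / (γ - 1))

noncomputable def vu (x : Fin 2 → ℝ) : Fin 2 → ℝ :=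
  ![(5 / (2 * Real.pi)) * Real.exp ((1 - r2 x) / 2) * (5 - x 1),
    (5 / (2 * Real.pi)) * Real.exp ((1 - r2 x) / 2) * (x 0 - 5)]

/-! A velocity field `u = g(r²) · (5 - y, x - 5)` swirling about the centre `(5, 5)` is tangent
to the circles `r = const`, so `div(h(r²) u) = 0` for every radial density `h(r²)`, and its
convective acceleration is purely centripetal: `(u·∇)u = -g(r²)² (x - 5, y - 5)`. A radial
pressure `P(r²)` has gradient `2 P'(r²) (x - 5, y - 5)`, so the Euler equations reduce to the
cyclostrophic balance `2 P' = h g²` in the variable `s = r²`. For the Hu–Shu profiles, with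
`T = 1 + δT`, `ρ = T^(1/(γ-1))` and `p = T^(γ/(γ-1))`, one has
`2 p' = 2 γ/(γ-1) ρ T' = 25/(4π²) ρ e^(1-s) = ρ g²`. -/

noncomputable def swirl (g : ℝ → ℝ) (y : Fin 2 → ℝ) : Fin 2 → ℝ :=
  ![g (r2 y) * (5 - y 1), g (r2 y) * (y 0 - 5)]

section PartialDerivatives

variable {x : Fin 2 → ℝ}

lemma pd2_mul {f g : (Fin 2 → ℝ) → ℝ} (hf : DifferentiableAt ℝ f x)
    (hg : DifferentiableAt ℝ g x) (j : Fin 2) :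
    pd2 j (fun y => f y * g y) x = f x * pd2 j g x + g x * pd2 j f x := by
  simp [pd2, fderiv_fun_mul hf hg]

lemma pd2_apply_sub (i j : Fin 2) (c : ℝ) :
    pd2 j (fun y => y i - c) x = (Pi.single j 1 : Fin 2 → ℝ) i := by
  rw [pd2, ((hasFDerivAt_apply (𝕜 := ℝ) i x).sub_const c).fderiv]
  rfl

lemma pd2_sub_apply (i j : Fin 2) (c : ℝ) :
    pd2 j (fun y => c - y i) x = -(Pi.single j 1 : Fin 2 → ℝ) i := by
  rw [pd2, ((hasFDerivAt_apply (𝕜 := ℝ) i x).const_sub c).fderiv]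
  rfl

lemma differentiable_r2 : Differentiable ℝ r2 := by
  unfold r2; fun_prop

lemma pd2_r2 (j : Fin 2) : pd2 j r2 x = 2 * (x j - 5) := by
  have hsq (i : Fin 2) := ((hasFDerivAt_apply (𝕜 := ℝ) i x).sub_const 5).pow 2
  rw [pd2, HasFDerivAt.fderiv (f := r2) ((hsq 0).fun_add (hsq 1))]
  fin_cases j <;> simp

lemma pd2_comp_r2 {g : ℝ → ℝ} {g' : ℝ} (hg : HasDerivAt g g' (r2 x)) (j : Fin 2) :
    pd2 j (fun y => g (r2 y)) x = g' * (2 * (x j - 5)) := by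
  rw [pd2, HasFDerivAt.fderiv (f := fun y => g (r2 y))
    (hg.comp_hasFDerivAt x (differentiable_r2 x).hasFDerivAt), ← pd2_r2]
  simp [pd2]

end PartialDerivatives

section Swirl

variable {g : ℝ → ℝ} {g' : ℝ} {x : Fin 2 → ℝ}

lemma radial_mul_swirl (h : ℝ → ℝ) (i : Fin 2) :
    (fun y => h (r2 y) * swirl g y i) = fun y => swirl (fun s => h s * g s) y i := by
  funext y; fin_cases i <;> simp [swirl] <;> ring

lemma pd2_swirl_zero (hg : HasDerivAt g g' (r2 x)) (j : Fin 2) :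
    pd2 j (fun y => swirl g y 0) x
      = g' * (2 * (x j - 5)) * (5 - x 1) - g (r2 x) * (Pi.single j 1 : Fin 2 → ℝ) 1 := by
  have hgr : DifferentiableAt ℝ (fun y => g (r2 y)) x :=
    hg.differentiableAt.comp x (differentiable_r2 x)
  simp only [swirl, Matrix.cons_val_zero]
  rw [pd2_mul hgr (by fun_prop), pd2_comp_r2 hg, pd2_sub_apply]
  ring

lemma pd2_swirl_one (hg : HasDerivAt g g' (r2 x)) (j : Fin 2) :
    pd2 j (fun y => swirl g y 1) x
      = g' * (2 * (x j - 5)) * (x 0 - 5) + g (r2 x) * (Pi.single j 1 : Fin 2 → ℝ) 0 := by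
  have hgr : DifferentiableAt ℝ (fun y => g (r2 y)) x :=
    hg.differentiableAt.comp x (differentiable_r2 x)
  simp only [swirl, Matrix.cons_val_one, Matrix.cons_val_fin_one]
  rw [pd2_mul hgr (by fun_prop), pd2_comp_r2 hg, pd2_apply_sub]
  ring

lemma div_swirl (hg : DifferentiableAt ℝ g (r2 x)) :
    pd2 0 (fun y => swirl g y 0) x + pd2 1 (fun y => swirl g y 1) x = 0 := by
  rw [pd2_swirl_zero hg.hasDerivAt, pd2_swirl_one hg.hasDerivAt]
  simp only [Pi.single_eq_of_ne zero_ne_one, Pi.single_eq_of_ne one_ne_zero]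
  ring

lemma div_radial_mul_swirl {h : ℝ → ℝ} (hh : DifferentiableAt ℝ h (r2 x))
    (hg : DifferentiableAt ℝ g (r2 x)) :
    pd2 0 (fun y => h (r2 y) * swirl g y 0) x + pd2 1 (fun y => h (r2 y) * swirl g y 1) x = 0 := by
  rw [radial_mul_swirl, radial_mul_swirl]
  exact div_swirl (hh.mul hg)

lemma swirl_advection (hg : HasDerivAt g g' (r2 x)) (i : Fin 2) :
    ∑ j, swirl g x j * pd2 j (fun y => swirl g y i) x = -(g (r2 x) ^ 2 * (x i - 5)) := by
  rw [Fin.sum_univ_two]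
  fin_cases i <;> simp only [Fin.zero_eta, Fin.mk_one]
  · rw [pd2_swirl_zero hg, pd2_swirl_zero hg]
    simp only [swirl, Matrix.cons_val_zero, Matrix.cons_val_one, Matrix.cons_val_fin_one,
      Pi.single_eq_same, Pi.single_eq_of_ne one_ne_zero]
    ring
  · rw [pd2_swirl_one hg, pd2_swirl_one hg]
    simp only [swirl, Matrix.cons_val_zero, Matrix.cons_val_one, Matrix.cons_val_fin_one,
      Pi.single_eq_same, Pi.single_eq_of_ne zero_ne_one]
    ring

lemma swirl_euler_of_balance {h P : ℝ → ℝ} {P' : ℝ} (hg : HasDerivAt g g' (r2 x))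
    (hP : HasDerivAt P P' (r2 x)) (hbal : 2 * P' = h (r2 x) * g (r2 x) ^ 2) (i : Fin 2) :
    h (r2 x) * ∑ j, swirl g x j * pd2 j (fun y => swirl g y i) x
      + pd2 i (fun y => P (r2 y)) x = 0 := by
  rw [swirl_advection hg, pd2_comp_r2 hP]
  linear_combination (x i - 5) * hbal

end Swirl

/- Radial profiles in the variable `s = r2 x`, written so that `vu = swirl vortexSpeed` and
`1 + δT γ x = vortexTemperature γ (r2 x)` hold definitionally. -/
noncomputable def vortexSpeed (s : ℝ) : ℝ := 5 / (2 * π) * exp ((1 - s) / 2)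

noncomputable def vortexTemperature (γ s : ℝ) : ℝ :=
  1 + -((γ - 1) * (25 / (8 * γ * π ^ 2)) * exp (1 - s))

lemma vortexSpeed_sq (s : ℝ) : vortexSpeed s ^ 2 = 25 / (4 * π ^ 2) * exp (1 - s) := by
  rw [vortexSpeed, mul_pow, ← exp_nat_mul]
  ring_nf

lemma differentiable_vortexSpeed : Differentiable ℝ vortexSpeed := by
  unfold vortexSpeed; fun_prop

lemma hasDerivAt_vortexTemperature (γ s : ℝ) :
    HasDerivAt (vortexTemperature γ) ((γ - 1) * (25 / (8 * γ * π ^ 2)) * exp (1 - s)) s :=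
  ((((hasDerivAt_id' s).const_sub 1).exp.const_mul
    ((γ - 1) * (25 / (8 * γ * π ^ 2)))).fun_neg.const_add 1).congr_deriv (by ring)

lemma vortex_cyclostrophic_balance {γ s : ℝ} (hγ : 1 < γ) :
    2 * ((γ - 1) * (25 / (8 * γ * π ^ 2)) * exp (1 - s) * (γ / (γ - 1))
      * vortexTemperature γ s ^ (γ / (γ - 1) - 1))
      = vortexTemperature γ s ^ (1 / (γ - 1)) * vortexSpeed s ^ 2 := by
  have hexp : γ / (γ - 1) - 1 = 1 / (γ - 1) := by
    field_simp [(sub_pos.2 hγ).ne']; ring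
  rw [hexp, vortexSpeed_sq]
  field_simp [(sub_pos.2 hγ).ne', (by linarith : γ ≠ 0), pi_ne_zero]
  ring

/-- The isentropic (Hu–Shu) vortex is a stationary solution of the 2D compressible
Euler equations: `div(ρu) = 0` and `ρ(u·∇)u + ∇p = 0` wherever `1 + δT > 0`. -/
theorem stmt17 (γ : ℝ) (hγ : 1 < γ) :
    ∀ x : Fin 2 → ℝ, 0 < 1 + δT γ x →
      (pd2 0 (fun y => vρ γ y * vu y 0) x + pd2 1 (fun y => vρ γ y * vu y 1) x = 0)
      ∧ (∀ i, vρ γ x * (∑ j, vu x j * pd2 j (fun y => vu y i) x)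
            + pd2 i (vp γ) x = 0) := by
  intro x hx
  have hT := hasDerivAt_vortexTemperature γ (r2 x)
  have hρ := hT.rpow_const (p := 1 / (γ - 1)) (Or.inl hx.ne')
  have hp := hT.rpow_const (p := γ / (γ - 1)) (Or.inl hx.ne')
  refine ⟨div_radial_mul_swirl hρ.differentiableAt (differentiable_vortexSpeed _), fun i => ?_⟩
  exact swirl_euler_of_balance (h := fun s => vortexTemperature γ s ^ (1 / (γ - 1)))
    (differentiable_vortexSpeed _).hasDerivAt hp (vortex_cyclostrophic_balance hγ) i
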